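/- arXiv:math/0206188 — 5 statements merged into one kernel-verified Lean document; each statement's English description precedes it below -/
import Mathlib

section
/- Let p be a prime number, let A be an integral domain of characteristic p that is finitely generated as an algebra over 𝔽_p, let B be a finitely generated 𝔽_p-algebra, and let φ : B → A be a ring homomorphism. Then the following are equivalent: (1) there exists a natural number m ≥ 1 with frob_A^m ∘ φ = φ, where frob_A : A → A is the Frobenius homomorphism a ↦ a^p; (2) the induced map PrimeSpectrum.comap φ : PrimeSpectrum A → PrimeSpectrum B is a constant map. -/
/-!
If `φ` is fixed by a power `q = p ^ m` of Frobenius, every `φ b` satisfies `x ^ q = x`; in a domain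
such an element is zero or a unit, so every prime of `A` pulls back to `ker φ`. Conversely, a residue
field of `A` at a maximal ideal `𝔪` is finite by Zariski's lemma, so some `p ^ m`-th power map fixes
`A ⧸ 𝔪`; since `𝔪` and `⊥` pull back to the same prime, `ker φ = φ⁻¹ 𝔪`, so `φ (b ^ p ^ m - b) ∈ 𝔪`
already forces `φ (b ^ p ^ m) = φ b`.
-/

theorem isUnit_of_pow_eq_self {M₀ : Type*} [CommMonoidWithZero M₀] [IsRightCancelMulZero M₀]
    {x : M₀} {n : ℕ} (hn : 2 ≤ n) (hx : x ^ n = x) (hx0 : x ≠ 0) : IsUnit x := by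
  have h : x ^ (n - 1) * x = 1 * x := by rw [← pow_succ, Nat.sub_add_cancel (by omega), hx, one_mul]
  exact IsUnit.of_pow_eq_one (mul_right_cancel₀ hx0 h) (by omega)

theorem Ideal.comap_eq_ker_of_pow_eq_self {R A : Type*} [Semiring R] [CommRing A] [IsDomain A]
    (φ : R →+* A) {n : ℕ} (hn : 2 ≤ n) (hφ : ∀ b, φ b ^ n = φ b) {P : Ideal A} (hP : P ≠ ⊤) :
    P.comap φ = RingHom.ker φ := by
  ext b
  refine ⟨fun hb => ?_, fun hb => by simp [RingHom.mem_ker.mp hb]⟩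
  by_contra hb0
  exact hP (P.eq_top_of_isUnit_mem hb (isUnit_of_pow_eq_self hn (hφ b) hb0))

theorem Ideal.exists_pow_card_pow_sub_mem (K : Type*) {A : Type*} [Field K] [Finite K]
    [CommRing A] [Algebra K A] [Algebra.FiniteType K A] (𝔪 : Ideal A) [𝔪.IsMaximal] :
    ∃ m, 1 ≤ m ∧ ∀ a : A, a ^ Nat.card K ^ m - a ∈ 𝔪 := by
  let := Ideal.Quotient.field 𝔪
  have := finite_of_finite_type_of_isJacobsonRing K (A ⧸ 𝔪)
  have := Module.finite_of_finite K (M := A ⧸ 𝔪)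
  have := Fintype.ofFinite (A ⧸ 𝔪)
  refine ⟨Module.finrank K (A ⧸ 𝔪), Module.finrank_pos, fun a => ?_⟩
  rw [← Ideal.Quotient.eq_zero_iff_mem, map_sub, map_pow, ← Module.natCard_eq_pow_finrank,
    ← Fintype.card_eq_nat_card, FiniteField.pow_card, sub_self]

theorem exists_frobenius_fix_iff_comap_constant_general
    (p : ℕ) [Fact p.Prime]
    (A B : Type*) [CommRing A] [IsDomain A] [CharP A p]
    [Algebra (ZMod p) A] [Algebra.FiniteType (ZMod p) A]
    [CommRing B]
    (φ : B →+* A) :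
    (∃ m : ℕ, 1 ≤ m ∧ (iterateFrobenius A p m).comp φ = φ) ↔
      (∃ c : PrimeSpectrum B, ∀ q : PrimeSpectrum A, PrimeSpectrum.comap φ q = c) := by
  have hp : 1 < p := (Fact.out : p.Prime).one_lt
  constructor
  · rintro ⟨m, hm, hfix⟩
    refine ⟨⟨RingHom.ker φ, RingHom.ker_isPrime φ⟩, fun q => PrimeSpectrum.ext ?_⟩
    exact Ideal.comap_eq_ker_of_pow_eq_self φ (Nat.one_lt_pow (by omega) hp)
      (fun b => congr($hfix b)) q.isPrime.ne_top
  · rintro ⟨c, hc⟩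
    have hker (q : PrimeSpectrum A) : q.asIdeal.comap φ = RingHom.ker φ := by
      rw [← PrimeSpectrum.comap_asIdeal, hc q, ← hc ⟨⊥, Ideal.isPrime_bot⟩]
      exact (RingHom.ker_eq_comap_bot φ).symm
    obtain ⟨𝔪, h𝔪⟩ := Ideal.exists_maximal A
    obtain ⟨m, hm, hpow⟩ := 𝔪.exists_pow_card_pow_sub_mem (ZMod p)
    rw [Nat.card_zmod] at hpow
    refine ⟨m, hm, RingHom.ext fun b => ?_⟩
    have : b ^ p ^ m - b ∈ RingHom.ker φ := by
      rw [← hker ⟨𝔪, h𝔪.isPrime⟩, Ideal.mem_comap, map_sub, map_pow]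
      exact hpow (φ b)
    rwa [RingHom.mem_ker, map_sub, map_pow, sub_eq_zero] at this

/-- For `A` an integral domain of characteristic `p`, finitely generated over
`𝔽_p`, `B` a finitely generated `𝔽_p`-algebra and `φ : B →+* A`: there exists `m ≥ 1` with
`frob_A^m ∘ φ = φ` if and only if the induced map on prime spectra is constant. -/
theorem exists_frobenius_fix_iff_comap_constant
    (p : ℕ) [Fact p.Prime]
    (A B : Type*) [CommRing A] [IsDomain A] [CharP A p]
    [Algebra (ZMod p) A] [Algebra.FiniteType (ZMod p) A]
    [CommRing B] [Algebra (ZMod p) B] [Algebra.FiniteType (ZMod p) B]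
    (φ : B →+* A) :
    (∃ m : ℕ, 1 ≤ m ∧ (iterateFrobenius A p m).comp φ = φ) ↔
      (∃ c : PrimeSpectrum B, ∀ q : PrimeSpectrum A, PrimeSpectrum.comap φ q = c) :=
  exists_frobenius_fix_iff_comap_constant_general p A B φ
end

section
/- Let A be an integral domain that is finitely generated as a ℤ-algebra and whose field of fractions is a number field (a finite extension of ℚ). Then the set of prime ideals 𝔭 of A such that the quotient A/𝔭 is a finite field of prime cardinality is an infinite set, and this set of points is dense in PrimeSpectrum A. -/
/-!
Let `K = Frac A`. Choose an algebraic integer `α` with `ℚ(α) = K` and let `f` be its minimal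
polynomial over `ℤ`. Every element of `K` has a nonzero integer multiple in `ℤ[α]`, so for
`g ≠ 0` the finitely generated ring `A[1/g]` lies inside `ℤ[α][1/d]` for some nonzero integer `d`.
By Schur's theorem infinitely many primes `p` divide a value `f(n)`. For such `p` not dividing
`d`, sending `α ↦ n` defines a ring map `ℤ[α][1/d] → 𝔽_p`, whose restriction to `A` has kernel a
prime `𝔭` in the basic open set `D(g)` with `A/𝔭 ≅ 𝔽_p`.
-/

namespace Polynomial

theorem finite_setOfPred_eval_eq {R : Type*} [CommRing R] [IsDomain R] {f : R[X]}
    (hf : 0 < f.natDegree) (v : R) : {x | f.eval x = v}.Finite := by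
  by_contra h
  rw [eq_of_infinite_eval_eq f (C v) (by simpa using h), natDegree_C] at hf
  exact hf.false

theorem exists_prime_dvd_eval_not_dvd {f : ℤ[X]} (hf : 0 < f.natDegree) (hf0 : f.eval 0 ≠ 0)
    {N : ℤ} (hN : N ≠ 0) :
    ∃ p : ℕ, p.Prime ∧ (∃ n : ℤ, (p : ℤ) ∣ f.eval n) ∧ ¬(p : ℤ) ∣ N := by
  set c := f.eval 0
  -- For `m` with `f(cNm) ≠ ±c`, `f(cNm) = c(1 + Nmk)` and a prime factor of `1 + Nmk` avoids `N`.
  have hcomp : 0 < (f.comp (C (c * N) * X)).natDegree := by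
    rwa [natDegree_comp, natDegree_C_mul_X _ (mul_ne_zero hf0 hN), mul_one]
  obtain ⟨m, hm⟩ := ((finite_setOfPred_eval_eq hcomp c).union
    (finite_setOfPred_eval_eq hcomp (-c))).infinite_compl.nonempty
  simp only [Set.mem_compl_iff, Set.mem_union, Set.mem_ofPred_eq, eval_comp, eval_mul, eval_C,
    eval_X, not_or] at hm
  obtain ⟨k, hk⟩ : c * N * m ∣ f.eval (c * N * m) - c := by
    simpa using sub_dvd_eval_sub (c * N * m) 0 f
  set e := 1 + N * m * k
  have hfe : f.eval (c * N * m) = c * e := by linear_combination hk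
  have he : e.natAbs ≠ 1 := by
    rw [Ne, Int.natAbs_eq_iff]
    rintro (h | h)
    · exact hm.1 (by rw [hfe, h]; ring)
    · exact hm.2 (by rw [hfe, h]; ring)
  obtain ⟨p, hp, hpe⟩ := Nat.exists_prime_and_dvd he
  rw [← Int.natCast_dvd] at hpe
  refine ⟨p, hp, ⟨c * N * m, hfe ▸ hpe.mul_left c⟩, fun hpN => ?_⟩
  have hp1 : (p : ℤ) ∣ 1 := by
    simpa [e, mul_assoc] using dvd_sub hpe (hpN.mul_right (m * k))
  exact hp.one_lt.ne' (by exact_mod_cast Int.eq_one_of_dvd_one (by positivity) hp1)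

theorem infinite_setOfPred_prime_dvd_eval {f : ℤ[X]} (hf : 0 < f.natDegree) :
    {p : ℕ | p.Prime ∧ ∃ n : ℤ, (p : ℤ) ∣ f.eval n}.Infinite := by
  by_cases hf0 : f.eval 0 = 0
  · exact Nat.infinite_setOfPred_prime.mono fun p hp => ⟨hp, 0, by rw [hf0]; exact dvd_zero _⟩
  refine Set.infinite_of_forall_exists_gt fun M => ?_
  obtain ⟨p, hp, hpf, hpM⟩ :=
    exists_prime_dvd_eval_not_dvd hf hf0 (N := (M.factorial : ℤ)) (by positivity)
  rw [Int.natCast_dvd_natCast, hp.dvd_factorial] at hpM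
  exact ⟨p, ⟨hp, hpf⟩, not_le.mp hpM⟩

end Polynomial

namespace Subalgebra

variable {R K : Type*} [CommRing R] [Field K] [Algebra R K]

def away (B : Subalgebra R K) (s : B) : Subalgebra R K where
  carrier := {z | ∃ n : ℕ, (s : K) ^ n * z ∈ B}
  mul_mem' := by
    rintro x y ⟨m, hx⟩ ⟨n, hy⟩
    exact ⟨m + n, by convert B.mul_mem hx hy using 1; ring⟩
  add_mem' := by
    rintro x y ⟨m, hx⟩ ⟨n, hy⟩
    refine ⟨m + n, ?_⟩
    convert B.add_mem (B.mul_mem (B.pow_mem s.2 n) hx) (B.mul_mem (B.pow_mem s.2 m) hy) using 1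
    ring
  algebraMap_mem' r := ⟨0, by simp⟩

variable {B : Subalgebra R K}

theorem isUnit_of_inv_mem {C : Subalgebra R K} {z : C} (hz : (z : K) ≠ 0) (hinv : (z : K)⁻¹ ∈ C) :
    IsUnit z :=
  isUnit_iff_exists_inv.mpr ⟨⟨_, hinv⟩, Subtype.ext (mul_inv_cancel₀ hz)⟩

theorem le_away (s : B) : B ≤ B.away s := fun z hz => ⟨0, by simpa using hz⟩

theorem inv_mem_away (s : B) : (s : K)⁻¹ ∈ B.away s :=
  ⟨1, by rcases eq_or_ne (s : K) 0 with h | h <;> simp [h, B.one_mem, B.zero_mem]⟩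

theorem away_le_away_mul_right (s t : B) : B.away s ≤ B.away (s * t) := by
  rintro z ⟨n, hz⟩
  exact ⟨n, by convert B.mul_mem (B.pow_mem t.2 n) hz using 1; push_cast; ring⟩

theorem away_le_away_mul_left (s t : B) : B.away s ≤ B.away (t * s) :=
  mul_comm s t ▸ away_le_away_mul_right s t

theorem isLocalization_away (s : B) (hs : (s : K) ≠ 0) :
    letI := (inclusion (le_away s)).toRingHom.toAlgebra
    IsLocalization.Away s (B.away s) :=
  letI := (inclusion (le_away s)).toRingHom.toAlgebra
  IsLocalization.Away.mk s (isUnit_of_inv_mem hs (inv_mem_away s))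
    (fun z => by
      obtain ⟨n, hn⟩ := z.2
      exact ⟨n, ⟨_, hn⟩, Subtype.ext (mul_comm _ _)⟩)
    (fun a b h => ⟨0, by rw [inclusion_injective _ h]⟩)

theorem exists_ringHom_away_comp_inclusion {F : Type*} [CommRing F] {s : B} (hs : (s : K) ≠ 0)
    (χ : B →+* F) (hχ : IsUnit (χ s)) :
    ∃ χ' : B.away s →+* F, χ'.comp (inclusion (le_away s)) = χ :=
  letI := (inclusion (le_away s)).toRingHom.toAlgebra
  haveI := isLocalization_away s hs
  ⟨IsLocalization.Away.lift s hχ, IsLocalization.Away.lift_comp s hχ⟩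

end Subalgebra

open Polynomial

theorem exists_ringHom_adjoin_zmod_apply_eq {K : Type*} [Field K] [CharZero K] {α : K}
    (hα : IsIntegral ℤ α) {p : ℕ} {n : ℤ} (hpn : (p : ℤ) ∣ (minpoly ℤ α).eval n) :
    ∃ χ : Algebra.adjoin ℤ {α} →+* ZMod p,
      χ ⟨α, Algebra.self_mem_adjoin_singleton ℤ α⟩ = n := by
  have hroot : (minpoly ℤ α).eval₂ (Int.castRingHom (ZMod p)) (n : ZMod p) = 0 := by
    rw [← eq_intCast (Int.castRingHom (ZMod p)) n, eval₂_at_apply, eq_intCast,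
      ZMod.intCast_zmod_eq_zero_iff_dvd]
    exact hpn
  refine ⟨(AdjoinRoot.lift _ _ hroot).comp
    ((minpoly.equivAdjoin hα).symm : Algebra.adjoin ℤ {α} →+* AdjoinRoot (minpoly ℤ α)), ?_⟩
  have hgen : (minpoly.equivAdjoin hα).symm ⟨α, Algebra.self_mem_adjoin_singleton ℤ α⟩ =
      AdjoinRoot.root _ :=
    (AlgEquiv.symm_apply_eq _).mpr (Subtype.ext AdjoinRoot.Minpoly.coe_toAdjoin_mk_X).symm
  rw [RingHom.comp_apply, RingHom.coe_coe, hgen, AdjoinRoot.lift_root]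

section IntDenominators

variable {K : Type*} [Field K] (B : Subalgebra ℤ K)

theorem Subalgebra.exists_intCast_forall_mem_away {T : Finset K}
    (hT : ∀ x ∈ T, ∃ m : ℤ, m ≠ 0 ∧ x ∈ B.away (m : B)) :
    ∃ d : ℤ, d ≠ 0 ∧ ∀ x ∈ T, x ∈ B.away (d : B) := by
  choose! m hm0 hmx using hT
  refine ⟨∏ x ∈ T, m x, Finset.prod_ne_zero_iff.mpr hm0, fun x hx => ?_⟩
  obtain ⟨r, hr⟩ := Finset.dvd_prod_of_mem m hx
  rw [hr, Int.cast_mul]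
  exact B.away_le_away_mul_right _ _ (hmx x hx)

theorem Subalgebra.exists_intCast_mem_away_of_mem_adjoin [CharZero K] {T : Set K}
    (hT : ∀ t ∈ T, ∃ m : ℤ, m ≠ 0 ∧ t ∈ B.away (m : B)) {x : K}
    (hx : x ∈ Algebra.adjoin ℚ T) : ∃ m : ℤ, m ≠ 0 ∧ x ∈ B.away (m : B) := by
  induction hx using Algebra.adjoin_induction with
  | mem t ht => exact hT t ht
  | algebraMap q =>
    refine ⟨q.den, by exact_mod_cast q.den_nz, 1, ?_⟩
    have hq : (q.den : K) * q = q.num := by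
      exact_mod_cast congrArg (Rat.cast (K := K)) q.den_mul_eq_num
    simp [hq]
  | add y z _ _ hy hz =>
    obtain ⟨m, hm, hym⟩ := hy
    obtain ⟨m', hm', hzm⟩ := hz
    refine ⟨m * m', mul_ne_zero hm hm', ?_⟩
    rw [Int.cast_mul]
    exact add_mem (B.away_le_away_mul_right _ _ hym) (B.away_le_away_mul_left _ _ hzm)
  | mul y z _ _ hy hz =>
    obtain ⟨m, hm, hym⟩ := hy
    obtain ⟨m', hm', hzm⟩ := hz
    refine ⟨m * m', mul_ne_zero hm hm', ?_⟩
    rw [Int.cast_mul]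
    exact mul_mem (B.away_le_away_mul_right _ _ hym) (B.away_le_away_mul_left _ _ hzm)

end IntDenominators

theorem NumberField.exists_isIntegral_forall_exists_mem_away (K : Type*) [Field K]
    [NumberField K] :
    ∃ α : K, IsIntegral ℤ α ∧
      ∀ x : K, ∃ m : ℤ, m ≠ 0 ∧ x ∈ (Algebra.adjoin ℤ {α}).away (m : Algebra.adjoin ℤ {α}) := by
  obtain ⟨β, hβ⟩ := Field.exists_primitive_element ℚ K
  obtain ⟨y, hy, hyβ⟩ := ((IsFractionRing.isAlgebraic_iff ℤ ℚ K).mpr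
    (Algebra.IsAlgebraic.isAlgebraic β)).exists_integral_multiple
  refine ⟨y • β, hyβ, fun x => ?_⟩
  have hadj : Algebra.adjoin ℚ {β} = ⊤ := by
    rw [← IntermediateField.adjoin_simple_toSubalgebra_of_isAlgebraic
      (Algebra.IsAlgebraic.isAlgebraic β), hβ, IntermediateField.top_toSubalgebra]
  refine Subalgebra.exists_intCast_mem_away_of_mem_adjoin _ ?_ (hadj ▸ Algebra.mem_top)
  rintro t rfl
  exact ⟨y, hy, 1, by simp [zsmul_eq_mul]⟩

theorem exists_intCast_ringHom_away_isUnit {A K : Type*} [CommRing A] [Algebra.FiniteType ℤ A]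
    [Field K] {B : Subalgebra ℤ K} (hB : ∀ x : K, ∃ m : ℤ, m ≠ 0 ∧ x ∈ B.away (m : B))
    (φ : A →+* K) {g : A} (hg : φ g ≠ 0) :
    ∃ d : ℤ, d ≠ 0 ∧ ∃ ι : A →+* B.away (d : B), IsUnit (ι g) := by
  classical
  obtain ⟨T, hT⟩ := (Algebra.FiniteType.out : (⊤ : Subalgebra ℤ A).FG).map φ.toIntAlgHom
  obtain ⟨d, hd0, hd⟩ := B.exists_intCast_forall_mem_away (T := insert (φ g)⁻¹ T) fun x _ => hB x
  have hφ (a : A) : φ a ∈ B.away (d : B) := by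
    have ha : φ a ∈ Algebra.adjoin ℤ (T : Set K) := hT ▸ ⟨a, trivial, rfl⟩
    exact Algebra.adjoin_le (fun x hx => hd x (Finset.mem_insert_of_mem hx)) ha
  exact ⟨d, hd0, φ.codRestrict _ hφ,
    Subalgebra.isUnit_of_inv_mem hg (hd _ (Finset.mem_insert_self _ _))⟩

theorem infinite_setOfPred_prime_exists_ringHom_zmod_ne_zero {A K : Type*} [CommRing A]
    [Algebra.FiniteType ℤ A] [Field K] [NumberField K] (φ : A →+* K) {g : A} (hg : φ g ≠ 0) :
    {p : ℕ | p.Prime ∧ ∃ ψ : A →+* ZMod p, ψ g ≠ 0}.Infinite := by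
  obtain ⟨α, hα, hB⟩ := NumberField.exists_isIntegral_forall_exists_mem_away K
  obtain ⟨d, hd0, ι, hι⟩ := exists_intCast_ringHom_away_isUnit hB φ hg
  have hdvd : {p : ℕ | (p : ℤ) ∣ d}.Finite :=
    (Nat.divisors d.natAbs).finite_toSet.subset fun p hp =>
      Nat.mem_divisors.mpr ⟨Int.natCast_dvd.mp hp, by simpa using hd0⟩
  refine ((infinite_setOfPred_prime_dvd_eval (minpoly.natDegree_pos hα)).sdiff hdvd).mono ?_
  rintro p ⟨⟨hp, n, hpn⟩, hpd⟩
  have := Fact.mk hp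
  obtain ⟨χ, -⟩ := exists_ringHom_adjoin_zmod_apply_eq hα hpn
  have hχd : IsUnit (χ (d : Algebra.adjoin ℤ {α})) := by
    rw [map_intCast]
    exact Ne.isUnit fun h => hpd ((ZMod.intCast_zmod_eq_zero_iff_dvd d p).mp h)
  obtain ⟨χ', -⟩ := Subalgebra.exists_ringHom_away_comp_inclusion (by simpa using hd0) χ hχd
  exact ⟨hp, χ'.comp ι, (hι.map χ').ne_zero⟩

def primeFieldPoints (A : Type*) [CommRing A] : Set (PrimeSpectrum A) :=
  {𝔭 | ∃ p : ℕ, p.Prime ∧ Nonempty ((A ⧸ 𝔭.asIdeal) ≃+* ZMod p)}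

theorem ker_mem_primeFieldPoints {A : Type*} [CommRing A] {p : ℕ} [Fact p.Prime]
    (ψ : A →+* ZMod p) : ⟨RingHom.ker ψ, RingHom.ker_isPrime ψ⟩ ∈ primeFieldPoints A :=
  ⟨p, Fact.out, ⟨RingHom.quotientKerEquivOfSurjective (ZMod.ringHom_surjective ψ)⟩⟩

/-- Let `A` be an integral domain, finitely generated as a `ℤ`-algebra, whose
fraction field is a number field. Then the set of primes `𝔭` of `A` with `A ⧸ 𝔭` a finite
field of prime cardinality is infinite, and dense in `PrimeSpectrum A`. -/
theorem infinite_dense_primeField_primes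
    (A : Type*) [CommRing A] [IsDomain A] [Algebra.FiniteType ℤ A]
    [NumberField (FractionRing A)] :
    {𝔭 : PrimeSpectrum A | ∃ p : ℕ, p.Prime ∧
        Nonempty ((A ⧸ 𝔭.asIdeal) ≃+* ZMod p)}.Infinite ∧
      Dense {𝔭 : PrimeSpectrum A | ∃ p : ℕ, p.Prime ∧
        Nonempty ((A ⧸ 𝔭.asIdeal) ≃+* ZMod p)} := by
  change (primeFieldPoints A).Infinite ∧ Dense (primeFieldPoints A)
  have hprimes {g : A} (hg : g ≠ 0) :=
    infinite_setOfPred_prime_exists_ringHom_zmod_ne_zero (algebraMap A (FractionRing A))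
      ((map_ne_zero_iff _ (IsFractionRing.injective A _)).mpr hg)
  constructor
  · refine Set.Infinite.of_image (fun 𝔭 => Nat.card (A ⧸ 𝔭.asIdeal))
      ((hprimes one_ne_zero).mono ?_)
    rintro p ⟨hp, ψ, -⟩
    have := Fact.mk hp
    refine ⟨_, ker_mem_primeFieldPoints ψ, ?_⟩
    simp [Nat.card_congr (RingHom.quotientKerEquivOfSurjective (ZMod.ringHom_surjective ψ)).toEquiv]
  · rw [PrimeSpectrum.isTopologicalBasis_basic_opens.dense_iff]
    rintro _ ⟨g, rfl⟩ ⟨𝔮, h𝔮⟩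
    have hg : g ≠ 0 := by rintro rfl; simp at h𝔮
    obtain ⟨p, hp, ψ, hψg⟩ := (hprimes hg).nonempty
    have := Fact.mk hp
    exact ⟨_, hψg, ker_mem_primeFieldPoints ψ⟩
end

section
/- Let F be a finite field of characteristic p and let B be a commutative ring. If χ₁, χ₂ : B → F are ring homomorphisms with equal kernels, ker χ₁ = ker χ₂, then there exists a natural number m such that χ₂ = frob_F^m ∘ χ₁, where frob_F : F → F is the Frobenius ring homomorphism a ↦ a^p. -/
/-!
The quotient `B ⧸ ker χ₁` is a finite domain, hence a field `Q`, and `χ₁`, `χ₂` factor through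
two embeddings of `Q` into `F`. Since `F` is normal over `𝔽_p`, the second embedding is the first
followed by an `𝔽_p`-automorphism `τ` of `F`; as `Gal(F/𝔽_p)` is generated by the Frobenius, `τ`
is a power of it.
-/

open FiniteField

def RingHom.toZModAlgHom {n : ℕ} {A B : Type*} [Semiring A] [Semiring B] [Algebra (ZMod n) A]
    [Algebra (ZMod n) B] (f : A →+* B) : A →ₐ[ZMod n] B :=
  { f with
    commutes' := fun r =>
      RingHom.congr_fun (Subsingleton.elim (f.comp (algebraMap (ZMod n) A)) (algebraMap _ B)) r }

theorem AlgHom.exists_comp_eq_of_normal {k K E : Type*} [Field k] [Field K] [Field E]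
    [Algebra k K] [Algebra k E] [Normal k E] (f g : K →ₐ[k] E) :
    ∃ τ : E →ₐ[k] E, τ.comp f = g := by
  let _ : Algebra K E := f.toRingHom.toAlgebra
  have : IsScalarTower k K E := .of_algebraMap_eq fun r => (f.commutes r).symm
  exact ⟨g.liftNormal E, AlgHom.ext fun x => g.liftNormal_commutes E x⟩

namespace FiniteField

theorem exists_ringHom_comp_eq {K F : Type*} [Field K] [Field F] [Finite F] (φ ψ : K →+* F) :
    ∃ τ : F →+* F, τ.comp φ = ψ := by
  obtain ⟨p, _⟩ := CharP.exists F
  have : Fact p.Prime := ⟨CharP.char_is_prime F p⟩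
  have : CharP K p := φ.charP φ.injective p
  let _ := ZMod.algebra K p
  let _ := ZMod.algebra F p
  obtain ⟨τ, hτ⟩ := AlgHom.exists_comp_eq_of_normal (k := ZMod p) φ.toZModAlgHom ψ.toZModAlgHom
  exact ⟨τ, congr_arg AlgHom.toRingHom hτ⟩

theorem exists_ringHom_comp_eq_of_ker_le {B F : Type*} [CommRing B] [Field F] [Finite F]
    (χ₁ χ₂ : B →+* F) (h : RingHom.ker χ₁ ≤ RingHom.ker χ₂) :
    ∃ τ : F →+* F, τ.comp χ₁ = χ₂ := by
  let Q := B ⧸ RingHom.ker χ₁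
  have : (RingHom.ker χ₁).IsPrime := RingHom.ker_isPrime χ₁
  have : Finite Q := Finite.of_injective _ (RingHom.kerLift_injective χ₁)
  let _ : Field Q := (Finite.isField_of_domain Q).toField
  obtain ⟨τ, hτ⟩ :=
    exists_ringHom_comp_eq (K := Q) (RingHom.kerLift χ₁) (Ideal.Quotient.lift _ χ₂ h)
  exact ⟨τ, RingHom.ext fun b => RingHom.congr_fun hτ (Ideal.Quotient.mk _ b)⟩

theorem exists_eq_iterateFrobenius (p : ℕ) [Fact p.Prime] {F : Type*} [Field F] [Finite F]
    [CharP F p] (τ : F →+* F) : ∃ m : ℕ, τ = iterateFrobenius F p m := by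
  let _ := ZMod.algebra F p
  obtain ⟨⟨m, _⟩, hm⟩ := (bijective_frobeniusAlgHom_pow (ZMod p) F).2 τ.toZModAlgHom
  refine ⟨m, RingHom.ext fun x => ?_⟩
  have := AlgHom.congr_fun hm x
  simp only [AlgHom.coe_pow, coe_frobeniusAlgHom, pow_iterate, ZMod.card] at this
  rw [iterateFrobenius_def]
  exact this.symm

end FiniteField

/-- If `F` is a finite field of characteristic `p` and `χ₁ χ₂ : B →+* F` are
ring homomorphisms with equal kernels, then `χ₂ = frob_F^m ∘ χ₁` for some `m : ℕ`. -/
theorem eq_frobenius_comp_of_ker_eq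
    (p : ℕ) [Fact p.Prime]
    (F : Type*) [Field F] [Finite F] [CharP F p]
    (B : Type*) [CommRing B]
    (χ₁ χ₂ : B →+* F) (h : RingHom.ker χ₁ = RingHom.ker χ₂) :
    ∃ m : ℕ, χ₂ = (iterateFrobenius F p m).comp χ₁ := by
  obtain ⟨τ, rfl⟩ := exists_ringHom_comp_eq_of_ker_le χ₁ χ₂ h.le
  obtain ⟨m, rfl⟩ := exists_eq_iterateFrobenius p τ
  exact ⟨m, rfl⟩
end

section
/- Let p be a prime number, let A and B be commutative rings of characteristic p, and let φ, ψ : B → A be ring homomorphisms inducing the same map on prime spectra, PrimeSpectrum.comap φ = PrimeSpectrum.comap ψ. Let F be a finite field of cardinality p^r (r ≥ 1). Then for every ring homomorphism x : A → F there exists a natural number m with m < r such that x ∘ frob_A^m ∘ φ = x ∘ ψ, where frob_A : A → A is the Frobenius ring homomorphism a ↦ a^p. -/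
open Finset Polynomial

/-- Auxiliary: promote a ring hom between `ZMod p`-algebras to an algebra hom. -/
private def ringHomToAlgHom {p : ℕ} (K F : Type*) [CommRing K] [CommRing F]
    [Algebra (ZMod p) K] [Algebra (ZMod p) F] (h : K →+* F) : K →ₐ[ZMod p] F :=
  { toRingHom := h,
    commutes' := fun c =>
      RingHom.congr_fun
        (RingHom.ext_zmod (h.comp (algebraMap (ZMod p) K)) (algebraMap (ZMod p) F)) c }

private lemma ringHomToAlgHom_injective {p : ℕ} (K F : Type*) [CommRing K] [CommRing F]
    [Algebra (ZMod p) K] [Algebra (ZMod p) F] :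
    Function.Injective (ringHomToAlgHom (p := p) K F) := by
  intro h1 h2 he
  ext a
  exact DFunLike.congr_fun he a

/-- Key lemma: two ring homs into a finite field with the same kernel differ by a power
of Frobenius. -/
private lemma key_frobenius {p : ℕ} [hp : Fact p.Prime] {F : Type*} [Field F] [Fintype F]
    [CharP F p] {r : ℕ} (hF : Fintype.card F = p ^ r) {B : Type*} [CommRing B] [CharP B p]
    (f g : B →+* F) (hker : RingHom.ker f = RingHom.ker g) :
    ∃ m : ℕ, m < r ∧ ∀ b : B, f b ^ p ^ m = g b := by
  classical
  set q : Ideal B := RingHom.ker f with hq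
  let K := B ⧸ q
  let fb : K →+* F := RingHom.kerLift f
  have hfb : Function.Injective fb := RingHom.kerLift_injective f
  have hgker : ∀ b ∈ q, g b = 0 := by
    intro b hb
    exact RingHom.mem_ker.mp (hker ▸ hb)
  let gb : K →+* F := Ideal.Quotient.lift q g hgker
  haveI : IsDomain K := Function.Injective.isDomain fb hfb
  haveI : Finite K := Finite.of_injective fb hfb
  letI : Fintype K := Fintype.ofFinite K
  letI : Field K := (Finite.isField_of_domain K).toField
  haveI : CharP K p := by
    refine CharP.quotient' p q ?_
    intro n hn
    have h1 : f (n : B) = 0 := RingHom.mem_ker.mp hn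
    rw [map_natCast] at h1
    have h2 : p ∣ n := (CharP.cast_eq_zero_iff F p n).mp h1
    exact (CharP.cast_eq_zero_iff B p n).mpr h2
  letI : Algebra (ZMod p) K := ZMod.algebra _ _
  letI : Algebra (ZMod p) F := ZMod.algebra _ _
  set s := Module.finrank (ZMod p) K with hs
  have hcardK : Fintype.card K = p ^ s := by
    rw [Module.card_eq_pow_finrank (K := ZMod p) (V := K), ZMod.card]
  have hsr : s ≤ r := by
    have h1 : Fintype.card K ≤ Fintype.card F := Fintype.card_le_of_injective fb hfb
    rw [hcardK, hF] at h1
    exact (Nat.pow_le_pow_iff_right hp.out.one_lt).mp h1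
  haveI : Finite (K →ₐ[ZMod p] F) :=
    Finite.of_injective (fun φ => (φ : K → F)) DFunLike.coe_injective
  letI : Fintype (K →ₐ[ZMod p] F) := Fintype.ofFinite _
  have hcardle : Fintype.card (K →ₐ[ZMod p] F) ≤ s := by
    have li := linearIndependent_toLinearMap (ZMod p) K F
    have h2 := li.fintype_card_le_finrank
    rwa [Module.finrank_linearMap_self] at h2
  have epow : ∀ (i : ℕ) (a : F), ((frobenius F p) ^ i) a = a ^ p ^ i := by
    intro i a
    rw [RingHom.coe_pow, iterate_frobenius]
  -- the polynomial root counting argument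
  have hdist : ∀ d : ℕ, d ≠ 0 → d < s → ¬(∀ a : K, fb a ^ p ^ d = fb a) := by
    intro d hd hds hall
    set P : Polynomial F := X ^ p ^ d - X with hP
    have hP0 : P ≠ 0 := FiniteField.X_pow_card_pow_sub_X_ne_zero F hd hp.out.one_lt
    have hsub : (Finset.univ.image fb) ⊆ P.roots.toFinset := by
      intro y hy
      rw [Finset.mem_image] at hy
      obtain ⟨a, _, rfl⟩ := hy
      rw [Multiset.mem_toFinset, Polynomial.mem_roots hP0]
      simp [P, Polynomial.IsRoot, sub_eq_zero, hall a]
    have h1 : Fintype.card K ≤ P.roots.toFinset.card := by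
      calc Fintype.card K = (Finset.univ.image fb).card := by
              rw [Finset.card_image_of_injective _ hfb, Finset.card_univ]
        _ ≤ P.roots.toFinset.card := Finset.card_le_card hsub
    have h2 : P.roots.toFinset.card ≤ p ^ d := by
      calc P.roots.toFinset.card ≤ Multiset.card P.roots := P.roots.toFinset_card_le
        _ ≤ P.natDegree := P.card_roots'
        _ = p ^ d := FiniteField.X_pow_card_pow_sub_X_natDegree_eq F hd hp.out.one_lt
    have h3 := (h1.trans h2)
    rw [hcardK] at h3
    exact absurd h3 (not_le.mpr (Nat.pow_lt_pow_right hp.out.one_lt hds))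
  -- the family of Frobenius twists of fb
  set e : Fin s → (K →ₐ[ZMod p] F) :=
    fun i => ringHomToAlgHom K F (((frobenius F p) ^ (i : ℕ)).comp fb) with he
  have einj : Function.Injective e := by
    have mono : ∀ i j : Fin s, i ≤ j → e i = e j → i = j := by
      intro i j hij hEq
      have hEq' : ∀ a : K, fb a ^ p ^ (i : ℕ) = fb a ^ p ^ (j : ℕ) := by
        intro a
        have h0 := DFunLike.congr_fun hEq a
        simpa [he, ringHomToAlgHom, epow, iterate_frobenius] using h0
      by_contra hne
      have hij' : (i : ℕ) < (j : ℕ) :=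
        lt_of_le_of_ne hij (fun hc => hne (Fin.ext hc))
      set d := (j : ℕ) - (i : ℕ) with hd
      have hd0 : d ≠ 0 := Nat.sub_ne_zero_of_lt hij'
      have hds : d < s := lt_of_le_of_lt (Nat.sub_le _ _) j.isLt
      apply hdist d hd0 hds
      intro a
      have hjd : (j : ℕ) = d + (i : ℕ) := by omega
      have hstep : (fb a ^ p ^ d) ^ p ^ (i : ℕ) = fb a ^ p ^ (i : ℕ) := by
        rw [← pow_mul, ← pow_add, ← hjd, ← hEq' a]
      have hinj : Function.Injective (fun y : F => y ^ p ^ (i : ℕ)) := by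
        have h4 := Function.Injective.iterate (frobenius_inj F p) (i : ℕ)
        intro y1 y2 hy
        apply h4
        rw [iterate_frobenius, iterate_frobenius]
        exact hy
      exact hinj hstep
    intro i j hEq
    rcases le_total i j with hle | hle
    · exact mono i j hle hEq
    · exact (mono j i hle hEq.symm).symm
  have hcards : s ≤ Fintype.card (K →ₐ[ZMod p] F) := by
    have := Fintype.card_le_of_injective e einj
    simpa using this
  have hbij : Function.Bijective e := by
    refine (Fintype.bijective_iff_injective_and_card e).mpr ⟨einj, ?_⟩
    rw [Fintype.card_fin]
    exact le_antisymm hcards hcardle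
  obtain ⟨i, hi⟩ := hbij.2 (ringHomToAlgHom K F gb)
  have hcomp : ((frobenius F p) ^ (i : ℕ)).comp fb = gb :=
    ringHomToAlgHom_injective K F hi
  refine ⟨(i : ℕ), lt_of_lt_of_le i.isLt hsr, fun b => ?_⟩
  have h5 := RingHom.congr_fun hcomp (Ideal.Quotient.mk q b)
  rw [RingHom.comp_apply] at h5
  have hfbv : fb (Ideal.Quotient.mk q b) = f b := RingHom.kerLift_mk f b
  have hgbv : gb (Ideal.Quotient.mk q b) = g b := Ideal.Quotient.lift_mk q g hgker
  rw [hfbv, hgbv, epow] at h5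
  exact h5

/-- Let `A, B` be commutative rings of characteristic `p`, `φ ψ : B →+* A`
with the same induced map on prime spectra, and `F` a finite field of cardinality `p ^ r`
with `r ≥ 1`. Then every ring homomorphism `x : A →+* F` satisfies
`x ∘ frob_A^m ∘ φ = x ∘ ψ` for some `m < r`. -/
theorem exists_frobenius_exponent_lt_of_comap_eq
    (p : ℕ) [Fact p.Prime]
    (A B : Type*) [CommRing A] [CharP A p] [CommRing B] [CharP B p]
    (φ ψ : B →+* A)
    (h : (PrimeSpectrum.comap φ : PrimeSpectrum A → PrimeSpectrum B) =
      PrimeSpectrum.comap ψ)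
    (F : Type*) [Field F] [Fintype F] (r : ℕ) (hr : 1 ≤ r) (hF : Fintype.card F = p ^ r)
    (x : A →+* F) :
    ∃ m : ℕ, m < r ∧ x.comp ((iterateFrobenius A p m).comp φ) = x.comp ψ := by
  haveI : CharP F p := by
    have h0 : (p : F) = 0 := by
      have hc : (Fintype.card F : F) = 0 := Nat.cast_card_eq_zero F
      rw [hF] at hc
      push_cast at hc
      exact pow_eq_zero_iff (by omega : r ≠ 0) |>.mp hc
    have hchar : ringChar F = p := by
      have hdvd : ringChar F ∣ p := ringChar.dvd h0
      rcases (Fact.out : p.Prime).eq_one_or_self_of_dvd _ hdvd with h1 | h1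
      · exact absurd h1 (CharP.ringChar_ne_one)
      · exact h1
    exact hchar ▸ ringChar.charP F
  haveI : (RingHom.ker x).IsPrime := RingHom.ker_isPrime x
  have hker : RingHom.ker (x.comp φ) = RingHom.ker (x.comp ψ) := by
    have h1 := congrFun h ⟨RingHom.ker x, inferInstance⟩
    have h2 : Ideal.comap φ (RingHom.ker x) = Ideal.comap ψ (RingHom.ker x) :=
      congrArg PrimeSpectrum.asIdeal h1
    rw [← RingHom.comap_ker, ← RingHom.comap_ker]
    exact h2
  obtain ⟨m, hm, hfg⟩ := key_frobenius hF (x.comp φ) (x.comp ψ) hker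
  refine ⟨m, hm, ?_⟩
  ext b
  simp only [RingHom.comp_apply, iterateFrobenius_def, map_pow]
  exact hfg b
end

section
/- Let p be a prime number, let F be a finite field of characteristic p, let A and B be commutative rings of characteristic p, let φ, ψ : B → A be ring homomorphisms and x : A → F a ring homomorphism. Suppose r ≥ r' are natural numbers with x ∘ frob_A^r ∘ φ = x ∘ ψ and x ∘ frob_A^{r'} ∘ φ = x ∘ ψ, where frob_A : A → A is the Frobenius homomorphism a ↦ a^p. Let K be the subfield of F generated by the image of x ∘ φ : B → F. Then the degree [K : 𝔽_p] (the dimension of K as a vector space over the prime field 𝔽_p) divides r − r'. -/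
/-- The degree `[K : 𝔽_p]` of a subfield `K` of a field `F` of characteristic `p`, i.e. the
dimension of `K` as a vector space over the prime field `𝔽_p = ZMod p`. -/
noncomputable def Subfield.primeFieldDegree (p : ℕ) [Fact p.Prime] {F : Type*} [Field F]
    [CharP F p] (K : Subfield F) : ℕ :=
  letI : Algebra (ZMod p) K := ZMod.algebra K p
  Module.finrank (ZMod p) K

/-- Auxiliary: for `p ≥ 2`, if `p ^ n - 1 ∣ p ^ d - 1` then `n ∣ d`. -/
lemma aux_dvd_of_pow_sub_one_dvd (p : ℕ) (hp : 2 ≤ p) :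
    ∀ d n : ℕ, p ^ n - 1 ∣ p ^ d - 1 → n ∣ d := by
  intro d
  induction d using Nat.strong_induction_on with
  | _ d ih =>
    intro n h
    rcases Nat.eq_zero_or_pos n with rfl | hn
    · simp only [pow_zero, Nat.sub_self, Nat.zero_dvd] at h
      have hd : p ^ d ≤ 1 := Nat.sub_eq_zero_iff_le.mp h
      have : d = 0 := by
        by_contra hd0
        have := Nat.one_lt_pow hd0 (by omega : 1 < p)
        omega
      simp [this]
    rcases lt_or_ge d n with hdn | hnd
    · have hlt : p ^ d < p ^ n := Nat.pow_lt_pow_right (by omega) hdn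
      have h1 : 1 ≤ p ^ d := Nat.one_le_pow _ _ (by omega)
      rcases Nat.eq_zero_or_pos (p ^ d - 1) with h0 | hpos
      · have : d = 0 := by
          by_contra hd0
          have := Nat.one_lt_pow hd0 (by omega : 1 < p)
          omega
        simp [this]
      · exact absurd (Nat.le_of_dvd hpos h) (by omega)
    · have h1n : 1 ≤ p ^ n := Nat.one_le_pow _ _ (by omega)
      have h1dn : 1 ≤ p ^ (d - n) := Nat.one_le_pow _ _ (by omega)
      have hle : p ^ (d - n) ≤ p ^ d := Nat.pow_le_pow_right (by omega) (by omega)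
      have e1 : p ^ (d - n) * (p ^ n - 1) = p ^ d - p ^ (d - n) := by
        rw [Nat.mul_sub, mul_one, ← pow_add]
        congr 2
        omega
      have key : p ^ d - 1 = p ^ (d - n) * (p ^ n - 1) + (p ^ (d - n) - 1) := by
        rw [e1]; omega
      have h2 : p ^ n - 1 ∣ p ^ (d - n) - 1 :=
        (Nat.dvd_add_right ⟨p ^ (d - n), by ring⟩).mp (key ▸ h)
      have hdvd : n ∣ d - n := ih (d - n) (by omega) n h2
      have hdeq : d = (d - n) + n := by omega
      rw [hdeq]
      exact Nat.dvd_add hdvd dvd_rfl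

/-- Let `A, B` be commutative rings of characteristic `p`, `F` a finite
field of characteristic `p`, `φ ψ : B →+* A`, `x : A →+* F`, and `r ≥ r'` natural numbers
with `x ∘ frob_A^r ∘ φ = x ∘ ψ` and `x ∘ frob_A^{r'} ∘ φ = x ∘ ψ`. If `K` is the subfield of
`F` generated by the image of `x ∘ φ`, then `[K : 𝔽_p]` divides `r - r'`. -/
theorem primeFieldDegree_dvd_sub_of_frobenius_coincidence
    (p : ℕ) [Fact p.Prime]
    (F : Type*) [Field F] [Finite F] [CharP F p]
    (A B : Type*) [CommRing A] [CharP A p] [CommRing B] [CharP B p]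
    (φ ψ : B →+* A) (x : A →+* F)
    (r r' : ℕ) (hrr' : r' ≤ r)
    (hr : x.comp ((iterateFrobenius A p r).comp φ) = x.comp ψ)
    (hr' : x.comp ((iterateFrobenius A p r').comp φ) = x.comp ψ) :
    (Subfield.closure (Set.range (x.comp φ))).primeFieldDegree p ∣ r - r' := by
  have hp2 : 2 ≤ p := (Fact.out : p.Prime).two_le
  set d := r - r' with hd
  set K := Subfield.closure (Set.range (x.comp φ)) with hK
  -- every generator y satisfies y ^ p ^ d = y
  have hgen : ∀ y ∈ Set.range (x.comp φ), y ^ p ^ d = y := by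
    rintro _ ⟨b, rfl⟩
    have h1 : x (φ b ^ p ^ r) = x (ψ b) := by
      have := congrFun (congrArg DFunLike.coe hr) b
      simpa [iterateFrobenius_def] using this
    have h2 : x (φ b ^ p ^ r') = x (ψ b) := by
      have := congrFun (congrArg DFunLike.coe hr') b
      simpa [iterateFrobenius_def] using this
    have h3 : (x (φ b)) ^ p ^ r = (x (φ b)) ^ p ^ r' := by
      rw [← map_pow x (φ b), ← map_pow x (φ b), h1, h2]
    have h4 : ((x (φ b)) ^ p ^ d) ^ p ^ r' = (x (φ b)) ^ p ^ r' := by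
      rw [← pow_mul, ← pow_add]
      rw [show d + r' = r by omega]
      exact h3
    have hinj : Function.Injective (iterateFrobenius F p r') :=
      iterateFrobenius_inj F p r'
    have := hinj (a₁ := (x (φ b)) ^ p ^ d) (a₂ := x (φ b))
      (by simpa [iterateFrobenius_def] using h4)
    simpa [RingHom.comp_apply] using this
  -- hence every element of K satisfies y ^ p ^ d = y
  have hKfix : ∀ y ∈ K, y ^ p ^ d = y := by
    have hle : K ≤ RingHom.eqLocusField (iterateFrobenius F p d) (RingHom.id F) :=
      Subfield.closure_le.mpr (fun y hy => by
        simpa [RingHom.eqLocusField, RingHom.eqLocus, iterateFrobenius_def]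
          using hgen y hy)
    intro y hy
    have := hle hy
    simpa [RingHom.eqLocusField, RingHom.eqLocus, iterateFrobenius_def] using this
  -- now work inside the finite field K
  letI : Fintype F := Fintype.ofFinite F
  letI : Fintype K := Fintype.ofFinite K
  letI : Algebra (ZMod p) K := ZMod.algebra K p
  set n := Subfield.primeFieldDegree p K with hn
  have hcard : Fintype.card K = p ^ n := by
    have := Module.card_eq_pow_finrank (K := ZMod p) (V := K)
    rwa [ZMod.card] at this
  -- every unit of K satisfies u ^ (p ^ d - 1) = 1
  have hunits : ∀ u : Kˣ, u ^ (p ^ d - 1) = 1 := by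
    intro u
    have hu : ((u : K) : F) ^ p ^ d = ((u : K) : F) := hKfix _ (u : K).2
    have huK : (u : K) ^ p ^ d = (u : K) := Subtype.ext (by simpa using hu)
    have hu' : u ^ p ^ d = u := Units.ext (by simpa using huK)
    have h1 : 1 ≤ p ^ d := Nat.one_le_pow _ _ (by omega)
    have h2 : u ^ (p ^ d - 1) * u = u := by
      rw [← pow_succ, Nat.sub_add_cancel h1, hu']
    exact mul_right_cancel (b := u) (by rw [h2, one_mul])
  have hdvd : Fintype.card K - 1 ∣ p ^ d - 1 :=
    (FiniteField.forall_pow_eq_one_iff (K := K) (p ^ d - 1)).mp hunits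
  rw [hcard] at hdvd
  exact aux_dvd_of_pow_sub_one_dvd p hp2 d n hdvd
end
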